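/- Let L ≥ 0, K ⊆ ℝ^d compact, and let f_n be a sequence in W^L(K) with C := liminf_{n→∞} ‖f_n‖_{W^L(K)} < ∞. Then there exist f ∈ W^L(K) with ‖f‖_{W^L(K)} ≤ C and a subsequence f_{n_k} such that f_{n_k} → f strongly in C^{0,α}(K) for every α < 1. -/

import Mathlib

open MeasureTheory Set Filter Topology
open scoped ENNReal NNReal Classical

noncomputable section

/-- The rectified linear unit. -/
def relu (z : ℝ) : ℝ := max z 0

/-- The Borel σ-algebra on `C(K, ℝ)` for the topology of uniform convergence
(= compact-open topology for compact `K`). -/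
instance ctsMeasurableSpace {d : ℕ} (K : Set (Fin d → ℝ)) : MeasurableSpace C(K, ℝ) := borel _

/-- `(μp, μn)` is a (Jordan-decomposed) signed-measure representation of `f` over the
class `H ⊆ C(K, ℝ)`: both parts are finite measures concentrated on `H`, and
`f x = ∫ relu (g x) dμp - ∫ relu (g x) dμn` for every `x ∈ K`. -/
def IsBarronRep {d : ℕ} (K : Set (Fin d → ℝ)) (H : Set C(K, ℝ)) (f : C(K, ℝ))
    (μp μn : Measure C(K, ℝ)) : Prop :=
  IsFiniteMeasure μp ∧ IsFiniteMeasure μn ∧ μp Hᶜ = 0 ∧ μn Hᶜ = 0 ∧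
    ∀ x : K, f x = (∫ g : C(K, ℝ), relu (g x) ∂μp) - ∫ g : C(K, ℝ), relu (g x) ∂μn

/-- The generalized Barron norm `‖f‖_{X,K}`, where `H` plays the role of the closed unit
ball `B^X` (realized inside `C(K,ℝ)`): the infimum of the total variation mass over all
signed-measure representations of `f`. -/
def barronNorm {d : ℕ} (K : Set (Fin d → ℝ)) (H : Set C(K, ℝ)) (f : C(K, ℝ)) : ℝ≥0∞ :=
  ⨅ p : {p : Measure C(K, ℝ) × Measure C(K, ℝ) // IsBarronRep K H f p.1 p.2},
    p.1.1 Set.univ + p.1.2 Set.univ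

/-- The neural tree norm `‖·‖_{W^L(K)}`. For `L = 0` it is the norm `‖w‖_{ℓ¹} + |b|` of the
space of affine functions `x ↦ wᵀx + b`; for `L ≥ 1`, `W^L(K) = B_{W^{L-1}(K), K}` is the
generalized Barron space modelled on `X = W^{L-1}(K)`, whose unit ball is
`{g : treeNorm K (L-1) g ≤ 1}`.  A continuous function `f` belongs to `W^L(K)` iff
`treeNorm K L f ≠ ∞`. -/
def treeNorm {d : ℕ} (K : Set (Fin d → ℝ)) : ℕ → C(K, ℝ) → ℝ≥0∞
  | 0, f =>
    ⨅ p : {p : (Fin d → ℝ) × ℝ //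
        ∀ x : K, f x = (∑ i : Fin d, p.1 i * (x : Fin d → ℝ) i) + p.2},
      ENNReal.ofReal ((∑ i : Fin d, |p.1.1 i|) + |p.1.2|)
  | (L + 1), f => barronNorm K {g : C(K, ℝ) | treeNorm K L g ≤ 1} f

/-- The Hölder norm `‖u‖_{C^{0,α}(K)} = ‖u‖_{C⁰(K)} + [u]_{C^{0,α}(K)}` (valued in `ℝ≥0∞`),
for functions on `K ⊆ ℝ^d` with the `ℓ∞` norm on `ℝ^d`. -/
def holderNorm {d : ℕ} (K : Set (Fin d → ℝ)) (α : ℝ) (u : K → ℝ) : ℝ≥0∞ :=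
  (⨆ x : K, (‖u x‖₊ : ℝ≥0∞)) +
    ⨆ x : K, ⨆ y : K, if x = y then 0 else (‖u x - u y‖₊ : ℝ≥0∞) / edist x y ^ α

end

/-!
By induction on `L`, the balls `{‖f‖_{W^L(K)} ≤ c}` are compact in `C(K)`. For `K` inside the
`ℓ∞`-ball of radius `R ≥ 1`, their elements are bounded by `c R` and `c`-Lipschitz, so Arzelà–Ascoli
makes them relatively compact. They are closed because representing measures live on the unit ball
of `W^{L-1}(K)`, compact by induction, where finite measures of bounded mass form a weakly compact
set (Prokhorov) and `g ↦ relu (g x)` is a bounded continuous function, so representations pass to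
the limit. Hence the tree norm is lower semicontinuous, and a subsequence realising the liminf
converges uniformly to some `F` with `‖F‖_{W^L(K)} ≤ C`. Uniform convergence of uniformly
Lipschitz functions gives `C^{0,α}` convergence for `α < 1` through the interpolation
`|u x - u y| ≤ (2 ‖u‖_∞)^{1-α} (Λ |x - y|)^α`.
-/

lemma abs_relu_le (a : ℝ) : |relu a| ≤ |a| := by
  unfold relu
  rw [abs_of_nonneg (le_max_right a 0)]
  exact max_le (le_abs_self a) (abs_nonneg a)

lemma abs_relu_sub_relu_le (a b : ℝ) : |relu a - relu b| ≤ |a - b| :=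
  abs_max_sub_max_le_abs a b 0

lemma continuous_relu : Continuous relu := continuous_id.max continuous_const

lemma abs_sum_mul_le {d : ℕ} (w v : Fin d → ℝ) : |∑ i, w i * v i| ≤ (∑ i, |w i|) * ‖v‖ := by
  rw [Finset.sum_mul]
  refine (Finset.abs_sum_le_sum_abs _ _).trans (Finset.sum_le_sum fun i _ => ?_)
  rw [abs_mul, ← Real.norm_eq_abs (v i)]
  exact mul_le_mul_of_nonneg_left (norm_le_pi_norm v i) (abs_nonneg _)

lemma ENNReal.le_iInf_mul_of_forall {ι : Sort*} {f : ι → ℝ≥0∞} {a e : ℝ≥0∞} (he : e ≠ ⊤)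
    (h0 : e = 0 → a = 0) (h : ∀ i, a ≤ f i * e) : a ≤ (⨅ i, f i) * e := by
  rcases eq_or_ne e 0 with rfl | he0
  · simp [h0 rfl]
  · rw [ENNReal.iInf_mul_of_ne he0 he]; exact le_iInf h

lemma ENNReal.ofReal_le_mul_ofReal {a b : ℝ} {m : ℝ≥0∞} (hm : m ≠ ⊤)
    (h : a ≤ m.toReal * b) : ENNReal.ofReal a ≤ m * ENNReal.ofReal b := by
  rw [← ENNReal.ofReal_toReal hm, ← ENNReal.ofReal_mul ENNReal.toReal_nonneg]
  exact ENNReal.ofReal_le_ofReal h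

lemma ENNReal.le_rpow_mul_rpow_of_le {a b c : ℝ≥0∞} {α : ℝ} (hα₀ : 0 ≤ α) (hα₁ : α ≤ 1)
    (hb : a ≤ b) (hc : a ≤ c) : a ≤ b ^ (1 - α) * c ^ α := by
  calc a = a ^ (1 - α) * a ^ α := by
        rw [← ENNReal.rpow_add_of_nonneg _ _ (by linarith) hα₀, sub_add_cancel, ENNReal.rpow_one]
    _ ≤ b ^ (1 - α) * c ^ α := by gcongr

theorem lowerSemicontinuous_iInf_of_isClosed {X ι : Type*} [TopologicalSpace X]
    {P : X → ι → Prop} {cost : ι → ℝ≥0∞}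
    (h : ∀ c : ℝ≥0, IsClosed {a | ∃ i, P a i ∧ cost i ≤ c}) :
    LowerSemicontinuous fun a => ⨅ i : {i // P a i}, cost i := by
  rw [lowerSemicontinuous_iff_isClosed_preimage]
  intro y
  rcases eq_or_ne y ⊤ with rfl | hy
  · simp
  have : (fun a => ⨅ i : {i // P a i}, cost i) ⁻¹' Iic y =
      ⋂ c : ℝ≥0, ⋂ (_ : y < c), {a | ∃ i, P a i ∧ cost i ≤ c} := by
    ext a
    simp only [mem_preimage, mem_Iic, mem_iInter, mem_ofPred_eq]
    refine ⟨fun ha c hc => ?_, fun ha => le_of_forall_gt_imp_ge_of_dense fun c hc => ?_⟩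
    · obtain ⟨⟨i, hi⟩, hlt⟩ := iInf_lt_iff.1 (ha.trans_lt hc)
      exact ⟨i, hi, hlt.le⟩
    · rcases eq_or_ne c ⊤ with rfl | hc'
      · exact le_top
      lift c to ℝ≥0 using hc'
      obtain ⟨i, hi, hc⟩ := ha c hc
      exact (iInf_le (fun i : {i // P a i} => cost i) ⟨i, hi⟩).trans hc
  rw [this]
  exact isClosed_iInter fun c => isClosed_iInter fun _ => h c

theorem LowerSemicontinuous.le_of_tendsto_of_le {X γ : Type*} [TopologicalSpace X]
    [LinearOrder γ] [DenselyOrdered γ] [TopologicalSpace γ] [OrderTopology γ] {f : X → γ}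
    (hf : LowerSemicontinuous f) {x : ℕ → X} {a : X} (hx : Tendsto x atTop (𝓝 a))
    {b : ℕ → γ} {c : γ} (hb : Tendsto b atTop (𝓝 c)) (h : ∀ n, f (x n) ≤ b n) : f a ≤ c :=
  le_of_forall_gt_imp_ge_of_dense fun c' hc' => (hf.isClosed_preimage c').mem_of_tendsto hx <|
    (hb.eventually (gt_mem_nhds hc')).mono fun n hn => (h n).trans hn.le

theorem ContinuousMap.isCompact_setOf_norm_le_lipschitzWith {X : Type*} [PseudoMetricSpace X]
    (B : ℝ) (Λ : ℝ≥0) : IsCompact {g : C(X, ℝ) | (∀ x, ‖g x‖ ≤ B) ∧ LipschitzWith Λ g} := by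
  refine ArzelaAscoli.isCompact_of_equicontinuous _ ?_
    (LipschitzWith.uniformEquicontinuous _ Λ fun g => g.2.2).equicontinuous
  have himage : ContinuousMap.toFun '' {g : C(X, ℝ) | (∀ x, ‖g x‖ ≤ B) ∧ LipschitzWith Λ g} =
      (Set.univ.pi fun _ => Metric.closedBall 0 B) ∩ {u | LipschitzWith Λ u} := by
    ext u
    simp only [mem_image, mem_inter_iff, mem_univ_pi, mem_closedBall_zero_iff, mem_ofPred_eq]
    exact ⟨by rintro ⟨g, hg, rfl⟩; exact hg, fun hu => ⟨⟨u, hu.2.continuous⟩, hu, rfl⟩⟩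
  rw [himage]
  exact (isCompact_univ_pi fun _ => isCompact_closedBall 0 B).inter_right
    (isClosed_setOfPred_lipschitzWith Λ)

theorem isCompact_setOf_finiteMeasure_pair_mass_le {E : Type*} [MeasurableSpace E]
    [TopologicalSpace E] [T2Space E] [BorelSpace E] {H : Set E} (hH : IsCompact H) (c : ℝ≥0) :
    IsCompact {p : FiniteMeasure E × FiniteMeasure E |
      p.1 Hᶜ = 0 ∧ p.2 Hᶜ = 0 ∧ p.1.mass + p.2.mass ≤ c} := by
  have hA := isCompact_setOfPred_finiteMeasure_le_of_isCompact c hH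
  convert (hA.prod hA).inter_right (isClosed_le (by fun_prop) continuous_const
    (f := fun p : FiniteMeasure E × FiniteMeasure E => p.1.mass + p.2.mass)) using 1
  ext ⟨μ, ν⟩
  simp only [mem_ofPred_eq, mem_inter_iff, mem_prod]
  exact ⟨fun ⟨hμ, hν, h⟩ => ⟨⟨⟨le_self_add.trans h, hμ⟩, le_add_self.trans h, hν⟩, h⟩,
    fun ⟨⟨⟨_, hμ⟩, _, hν⟩, h⟩ => ⟨hμ, hν, h⟩⟩

section Holder

variable {d : ℕ} {K : Set (Fin d → ℝ)}

theorem holderNorm_le {α : ℝ} (hα₀ : 0 ≤ α) (hα₁ : α ≤ 1) {u : K → ℝ} {δ : ℝ≥0∞} {Λ : ℝ≥0}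
    (hδ : ∀ x, ‖u x‖ₑ ≤ δ) (hu : LipschitzWith Λ u) :
    holderNorm K α u ≤ δ + (2 * δ) ^ (1 - α) * (Λ : ℝ≥0∞) ^ α := by
  refine add_le_add (iSup_le hδ) (iSup₂_le fun x y => ?_)
  split_ifs
  · exact zero_le
  refine ENNReal.div_le_of_le_mul ?_
  have hsup : ‖u x - u y‖ₑ ≤ 2 * δ :=
    enorm_sub_le.trans (by rw [two_mul]; gcongr <;> apply hδ)
  have hlip : ‖u x - u y‖ₑ ≤ Λ * edist x y := by rw [← edist_eq_enorm_sub]; exact hu x y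
  calc (‖u x - u y‖₊ : ℝ≥0∞) = ‖u x - u y‖ₑ := rfl
    _ ≤ (2 * δ) ^ (1 - α) * (Λ * edist x y) ^ α :=
        ENNReal.le_rpow_mul_rpow_of_le hα₀ hα₁ hsup hlip
    _ = (2 * δ) ^ (1 - α) * (Λ : ℝ≥0∞) ^ α * edist x y ^ α := by
        rw [ENNReal.mul_rpow_of_nonneg _ _ hα₀, mul_assoc]

theorem tendsto_holderNorm_zero [CompactSpace K] {u : ℕ → C(K, ℝ)} (hu : Tendsto u atTop (𝓝 0))
    {Λ : ℝ≥0} (hΛ : ∀ k, LipschitzWith Λ (u k)) {α : ℝ} (hα₀ : 0 ≤ α) (hα₁ : α < 1) :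
    Tendsto (fun k => holderNorm K α (u k)) atTop (𝓝 0) := by
  set bound : ℝ≥0∞ → ℝ≥0∞ := fun δ => δ + (2 * δ) ^ (1 - α) * (Λ : ℝ≥0∞) ^ α
  have hbound : Tendsto (fun k => bound (ENNReal.ofReal ‖u k‖)) atTop (𝓝 0) := by
    have hcont : Continuous bound := by
      refine continuous_id.add (ENNReal.continuous_mul_const ?_ |>.comp ?_)
      · exact ENNReal.rpow_ne_top_of_nonneg hα₀ ENNReal.coe_ne_top
      · exact ENNReal.continuous_rpow_const.comp
          (ENNReal.continuous_const_mul ENNReal.ofNat_ne_top)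
    have h0 : bound 0 = 0 := by simp [bound, ENNReal.zero_rpow_of_pos (sub_pos.2 hα₁)]
    have hnorm := (ENNReal.continuous_ofReal.tendsto 0).comp
      (tendsto_zero_iff_norm_tendsto_zero.1 hu)
    rw [ENNReal.ofReal_zero] at hnorm
    exact h0 ▸ (hcont.tendsto 0).comp hnorm
  refine tendsto_of_tendsto_of_tendsto_of_le_of_le tendsto_const_nhds hbound (fun _ => zero_le)
    fun k => holderNorm_le hα₀ hα₁.le (fun x => ?_) (hΛ k)
  rw [← ofReal_norm]
  exact ENNReal.ofReal_le_ofReal ((u k).norm_coe_le_norm x)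

end Holder

instance instBorelSpaceContinuousMap {d : ℕ} (K : Set (Fin d → ℝ)) : BorelSpace C(K, ℝ) := ⟨rfl⟩

section BarronEstimates

variable {d : ℕ} {K : Set (Fin d → ℝ)} {H : Set C(K, ℝ)} {R : ℝ} {μ : Measure C(K, ℝ)}

lemma abs_integral_relu_le [IsFiniteMeasure μ] (hH : ∀ g ∈ H, ∀ x, |g x| ≤ R)
    (hμ : μ Hᶜ = 0) (x : K) : |∫ g, relu (g x) ∂μ| ≤ R * μ.real univ := by
  rw [← Real.norm_eq_abs]
  exact norm_integral_le_of_norm_le_const <| (ae_iff.2 hμ).mono fun g hg =>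
    (abs_relu_le _).trans (hH g hg x)

lemma abs_integral_relu_sub_le [IsFiniteMeasure μ] (hH_bdd : ∀ g ∈ H, ∀ x, |g x| ≤ R)
    (hH_lip : ∀ g ∈ H, LipschitzWith 1 g) (hμ : μ Hᶜ = 0) (x y : K) :
    |∫ g, relu (g x) ∂μ - ∫ g, relu (g y) ∂μ| ≤ dist x y * μ.real univ := by
  have hint : ∀ z : K, Integrable (fun g : C(K, ℝ) => relu (g z)) μ := fun z =>
    Integrable.of_bound (continuous_relu.comp (continuous_eval_const z)).aestronglyMeasurable R <|
      (ae_iff.2 hμ).mono fun g hg => (abs_relu_le _).trans (hH_bdd g hg z)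
  rw [← integral_sub (hint x) (hint y), ← Real.norm_eq_abs]
  refine norm_integral_le_of_norm_le_const <| (ae_iff.2 hμ).mono fun g hg => ?_
  rw [Real.norm_eq_abs]
  calc |relu (g x) - relu (g y)| ≤ |g x - g y| := abs_relu_sub_relu_le _ _
    _ = dist (g x) (g y) := (Real.dist_eq _ _).symm
    _ ≤ dist x y := by simpa using (hH_lip g hg).dist_le_mul x y

variable {f : C(K, ℝ)} {μp μn : Measure C(K, ℝ)}

theorem IsBarronRep.enorm_le (h : IsBarronRep K H f μp μn) (hH : ∀ g ∈ H, ∀ x, |g x| ≤ R)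
    (x : K) : ‖f x‖ₑ ≤ (μp univ + μn univ) * ENNReal.ofReal R := by
  obtain ⟨hp, hn, hp0, hn0, hf⟩ := h
  rw [Real.enorm_eq_ofReal_abs]
  refine ENNReal.ofReal_le_mul_ofReal (by finiteness) ?_
  rw [ENNReal.toReal_add (by finiteness) (by finiteness), hf x]
  have := abs_integral_relu_le hH hp0 x
  have := abs_integral_relu_le hH hn0 x
  have := abs_sub (∫ g, relu (g x) ∂μp) (∫ g, relu (g x) ∂μn)
  simp only [measureReal_def] at *
  linarith

theorem IsBarronRep.edist_le (h : IsBarronRep K H f μp μn) (hH_bdd : ∀ g ∈ H, ∀ x, |g x| ≤ R)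
    (hH_lip : ∀ g ∈ H, LipschitzWith 1 g) (x y : K) :
    edist (f x) (f y) ≤ (μp univ + μn univ) * edist x y := by
  obtain ⟨hp, hn, hp0, hn0, hf⟩ := h
  rw [edist_dist, edist_dist]
  refine ENNReal.ofReal_le_mul_ofReal (by finiteness) ?_
  rw [ENNReal.toReal_add (by finiteness) (by finiteness), Real.dist_eq, hf x, hf y]
  have := abs_integral_relu_sub_le hH_bdd hH_lip hp0 x y
  have := abs_integral_relu_sub_le hH_bdd hH_lip hn0 x y
  have := abs_sub (∫ g, relu (g x) ∂μp - ∫ g, relu (g y) ∂μp)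
    (∫ g, relu (g x) ∂μn - ∫ g, relu (g y) ∂μn)
  simp only [measureReal_def] at *
  rw [show ∀ a b c e : ℝ, a - b - (c - e) = a - c - (b - e) by intros; ring] at this
  nlinarith [dist_nonneg (x := x) (y := y)]

end BarronEstimates

section BarronClosedness

open scoped BoundedContinuousFunction

variable {d : ℕ} {K : Set (Fin d → ℝ)} [CompactSpace K] {H : Set C(K, ℝ)}

lemma exists_boundedContinuousFunction_eqOn_relu_eval (hH : IsCompact H) (x : K) :
    ∃ b : C(K, ℝ) →ᵇ ℝ, ∀ g ∈ H, b g = relu (g x) := by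
  have := isCompact_iff_compactSpace.1 hH
  obtain ⟨b, -, hb⟩ := BoundedContinuousFunction.exists_norm_eq_domRestrict_eq_of_closed
    (.mkOfCompact ⟨fun g : H => relu ((g : C(K, ℝ)) x),
      continuous_relu.comp ((continuous_eval_const x).comp continuous_subtype_val)⟩) hH.isClosed
  exact ⟨b, fun g hg => DFunLike.congr_fun hb ⟨g, hg⟩⟩

theorem isClosed_setOf_isBarronRep_mass_le (hH : IsCompact H) (c : ℝ≥0) :
    IsClosed {f : C(K, ℝ) | ∃ p : Measure C(K, ℝ) × Measure C(K, ℝ),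
      IsBarronRep K H f p.1 p.2 ∧ p.1 univ + p.2 univ ≤ c} := by
  choose b hb using exists_boundedContinuousFunction_eqOn_relu_eval hH
  have hint : ∀ μ : Measure C(K, ℝ), μ Hᶜ = 0 → ∀ x, ∫ g, relu (g x) ∂μ = ∫ g, b x g ∂μ :=
    fun μ hμ x => integral_congr_ae <| (ae_iff.2 hμ).mono fun g hg => (hb x g hg).symm
  -- The set is the projection of a closed subset of `C(K, ℝ) × S` with `S` compact.
  let S := {p : FiniteMeasure C(K, ℝ) × FiniteMeasure C(K, ℝ) |
    p.1 Hᶜ = 0 ∧ p.2 Hᶜ = 0 ∧ p.1.mass + p.2.mass ≤ c}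
  have := isCompact_iff_compactSpace.1 (isCompact_setOf_finiteMeasure_pair_mass_le hH c)
  let T : Set (C(K, ℝ) × S) := {q | ∀ x, q.1 x =
    ∫ g, b x g ∂(q.2.1.1 : Measure C(K, ℝ)) - ∫ g, b x g ∂(q.2.1.2 : Measure C(K, ℝ))}
  have hT : IsClosed T := by
    have hμ : Continuous fun q : C(K, ℝ) × S => q.2.1 := continuous_subtype_val.comp continuous_snd
    have hint_cont := FiniteMeasure.continuous_integral_boundedContinuousFunction (X := C(K, ℝ))
    simp only [T, ofPred_forall]
    exact isClosed_iInter fun x => isClosed_eq (by fun_prop)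
      (((hint_cont (b x)).comp (continuous_fst.comp hμ)).sub
        ((hint_cont (b x)).comp (continuous_snd.comp hμ)))
  convert isClosedMap_fst_of_compactSpace T hT using 1
  ext f
  simp only [mem_ofPred_eq, mem_image]
  constructor
  · rintro ⟨⟨μp, μn⟩, ⟨hp, hn, hp0, hn0, hf⟩, hmass⟩
    let νp : FiniteMeasure C(K, ℝ) := ⟨μp, hp⟩
    let νn : FiniteMeasure C(K, ℝ) := ⟨μn, hn⟩
    have hmass' : ((νp.mass + νn.mass : ℝ≥0) : ℝ≥0∞) ≤ c := by
      rw [ENNReal.coe_add, FiniteMeasure.ennreal_mass, FiniteMeasure.ennreal_mass]; exact hmass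
    refine ⟨⟨f, (νp, νn), (FiniteMeasure.null_iff_toMeasure_null _ _).2 hp0,
      (FiniteMeasure.null_iff_toMeasure_null _ _).2 hn0, ENNReal.coe_le_coe.1 hmass'⟩,
      fun x => ?_, rfl⟩
    rw [hf x, hint μp hp0, hint μn hn0]; rfl
  · rintro ⟨⟨f, ⟨⟨νp, νn⟩, hp0, hn0, hmass⟩⟩, hf, rfl⟩
    rw [FiniteMeasure.null_iff_toMeasure_null] at hp0 hn0
    refine ⟨(νp, νn), ⟨inferInstance, inferInstance, hp0, hn0, fun x => ?_⟩, ?_⟩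
    · rw [hf x, hint _ hp0, hint _ hn0]
    · rw [← FiniteMeasure.ennreal_mass, ← FiniteMeasure.ennreal_mass, ← ENNReal.coe_add]
      exact ENNReal.coe_le_coe.2 hmass

theorem lowerSemicontinuous_barronNorm (hH : IsCompact H) :
    LowerSemicontinuous (barronNorm K H) :=
  lowerSemicontinuous_iInf_of_isClosed (isClosed_setOf_isBarronRep_mass_le hH)

end BarronClosedness

section TreeSpaces

variable {d : ℕ} {K : Set (Fin d → ℝ)} {R : ℝ}

lemma abs_affine_le (hR : 1 ≤ R) {x : Fin d → ℝ} (hx : ‖x‖ ≤ R) (w : Fin d → ℝ) (b : ℝ) :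
    |(∑ i, w i * x i) + b| ≤ ((∑ i, |w i|) + |b|) * R := by
  have := abs_sum_mul_le w x
  have := abs_add_le (∑ i, w i * x i) b
  have : 0 ≤ ∑ i, |w i| := by positivity
  nlinarith [abs_nonneg b]

lemma abs_affine_sub_affine_le (w x y : Fin d → ℝ) (b : ℝ) :
    |((∑ i, w i * x i) + b) - ((∑ i, w i * y i) + b)| ≤ ((∑ i, |w i|) + |b|) * ‖x - y‖ := by
  rw [add_sub_add_right_eq_sub, ← Finset.sum_sub_distrib]
  simp_rw [← mul_sub]
  exact (abs_sum_mul_le w (x - y)).trans (by gcongr; exact le_add_of_nonneg_right (abs_nonneg b))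

theorem treeNorm_bounds (hR : 1 ≤ R) (hKR : ∀ x ∈ K, ‖x‖ ≤ R) (L : ℕ) (f : C(K, ℝ)) :
    (∀ x, ‖f x‖ₑ ≤ treeNorm K L f * ENNReal.ofReal R) ∧
      ∀ x y, edist (f x) (f y) ≤ treeNorm K L f * edist x y := by
  have hR₀ : ENNReal.ofReal R ≠ 0 := (ENNReal.ofReal_pos.2 (by linarith)).ne'
  have hedist : ∀ (g : C(K, ℝ)) (x y : K), edist x y = 0 → edist (g x) (g y) = 0 := by
    intro g x y h
    rw [edist_eq_zero] at h ⊢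
    rw [h]
  induction L generalizing f with
  | zero =>
    refine ⟨fun x => ENNReal.le_iInf_mul_of_forall ENNReal.ofReal_ne_top (absurd · hR₀)
        fun ⟨⟨w, b⟩, hf⟩ => ?_,
      fun x y => ENNReal.le_iInf_mul_of_forall (edist_ne_top x y) (hedist f x y)
        fun ⟨⟨w, b⟩, hf⟩ => ?_⟩
    · rw [Real.enorm_eq_ofReal_abs]
      refine ENNReal.ofReal_le_mul_ofReal ENNReal.ofReal_ne_top ?_
      rw [ENNReal.toReal_ofReal (by positivity), hf x]
      exact abs_affine_le hR (hKR x x.2) w b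
    · rw [edist_dist, edist_dist]
      refine ENNReal.ofReal_le_mul_ofReal ENNReal.ofReal_ne_top ?_
      rw [ENNReal.toReal_ofReal (by positivity), Real.dist_eq, hf x, hf y]
      exact abs_affine_sub_affine_le w x y b
  | succ L ih =>
    have hH_bdd : ∀ g ∈ {g : C(K, ℝ) | treeNorm K L g ≤ 1}, ∀ x, |g x| ≤ R := by
      intro g hg x
      have := ((ih g).1 x).trans (mul_le_of_le_one_left zero_le hg)
      rwa [Real.enorm_eq_ofReal_abs, ENNReal.ofReal_le_ofReal_iff (by linarith)] at this
    have hH_lip : ∀ g ∈ {g : C(K, ℝ) | treeNorm K L g ≤ 1}, LipschitzWith 1 g :=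
      fun g hg x y => by simpa using (ih g).2 x y |>.trans (mul_le_of_le_one_left zero_le hg)
    exact ⟨fun x => ENNReal.le_iInf_mul_of_forall ENNReal.ofReal_ne_top (absurd · hR₀)
        fun ⟨_, hf⟩ => hf.enorm_le hH_bdd x,
      fun x y => ENNReal.le_iInf_mul_of_forall (edist_ne_top x y) (hedist f x y)
        fun ⟨_, hf⟩ => hf.edist_le hH_bdd hH_lip x y⟩

theorem isClosed_setOf_affine_cost_le (c : ℝ≥0) :
    IsClosed {f : C(K, ℝ) | ∃ p : (Fin d → ℝ) × ℝ,
      (∀ x : K, f x = (∑ i, p.1 i * (x : Fin d → ℝ) i) + p.2) ∧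
        ENNReal.ofReal ((∑ i, |p.1 i|) + |p.2|) ≤ c} := by
  have hcont : Continuous fun q : ((Fin d → ℝ) × ℝ) × (Fin d → ℝ) =>
      (∑ i, q.1.1 i * q.2 i) + q.1.2 := by fun_prop
  let affine : (Fin d → ℝ) × ℝ → C(K, ℝ) := fun p =>
    ⟨fun x => (∑ i, p.1 i * (x : Fin d → ℝ) i) + p.2,
      hcont.comp (continuous_const.prodMk continuous_subtype_val)⟩
  have haffine : Continuous affine := ContinuousMap.continuous_of_continuous_uncurry _
    (hcont.comp (continuous_fst.prodMk (continuous_subtype_val.comp continuous_snd)))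
  let P := {p : (Fin d → ℝ) × ℝ | (∑ i, |p.1 i|) + |p.2| ≤ c}
  have hP : IsCompact P := by
    refine Metric.isCompact_of_isClosed_isBounded (isClosed_le (by fun_prop) continuous_const)
      ((Metric.isBounded_closedBall (x := 0) (r := c)).subset fun p hp => ?_)
    have h1 : ‖p.1‖ ≤ ∑ i, |p.1 i| := (pi_norm_le_iff_of_nonneg (by positivity)).2 fun i =>
      Finset.single_le_sum (f := fun i => |p.1 i|) (fun i _ => abs_nonneg _) (Finset.mem_univ i)
    rw [mem_closedBall_zero_iff, Prod.norm_def, Real.norm_eq_abs]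
    exact max_le (h1.trans (le_trans (by simp) hp)) (le_trans (by simp; positivity) hp)
  convert (hP.image haffine).isClosed using 1
  ext f
  simp only [mem_ofPred_eq, mem_image, ENNReal.ofReal_le_iff_le_toReal ENNReal.coe_ne_top,
    ENNReal.coe_toReal, P]
  exact exists_congr fun p => ⟨fun ⟨hf, hp⟩ => ⟨hp, ContinuousMap.ext fun x => (hf x).symm⟩,
    fun ⟨hp, hf⟩ => ⟨fun x => by rw [← hf]; rfl, hp⟩⟩

lemma isCompact_closure_setOf_treeNorm_le (hK : IsCompact K) (L : ℕ) (c : ℝ≥0) :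
    IsCompact (closure {f : C(K, ℝ) | treeNorm K L f ≤ c}) := by
  obtain ⟨R, hR⟩ := hK.isBounded.exists_norm_le
  have hS := ContinuousMap.isCompact_setOf_norm_le_lipschitzWith (X := K) (c * max R 1) c
  refine hS.of_isClosed_subset isClosed_closure (closure_minimal (fun f hf => ?_) hS.isClosed)
  obtain ⟨hbdd, hlip⟩ :=
    treeNorm_bounds (le_max_right R 1) (fun x hx => (hR x hx).trans (le_max_left R 1)) L f
  refine ⟨fun x => ?_, fun x y => (hlip x y).trans (by gcongr; exact hf)⟩
  have := (hbdd x).trans (mul_le_mul_left hf _)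
  rwa [← ofReal_norm, ← ENNReal.ofReal_coe_nnreal, ← ENNReal.ofReal_mul c.coe_nonneg,
    ENNReal.ofReal_le_ofReal_iff (by positivity)] at this

theorem lowerSemicontinuous_treeNorm (hK : IsCompact K) :
    ∀ L, LowerSemicontinuous (treeNorm K L)
  | 0 => lowerSemicontinuous_iInf_of_isClosed isClosed_setOf_affine_cost_le
  | L + 1 => by
    have := isCompact_iff_compactSpace.1 hK
    have hH := isCompact_closure_setOf_treeNorm_le hK L 1
    have hcl : IsClosed {f | treeNorm K L f ≤ ((1 : ℝ≥0) : ℝ≥0∞)} :=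
      (lowerSemicontinuous_treeNorm hK L).isClosed_preimage _
    rw [hcl.closure_eq, ENNReal.coe_one] at hH
    exact lowerSemicontinuous_barronNorm hH

theorem isCompact_setOf_treeNorm_le (hK : IsCompact K) (L : ℕ) (c : ℝ≥0) :
    IsCompact {f : C(K, ℝ) | treeNorm K L f ≤ c} := by
  have hcl : IsClosed {f | treeNorm K L f ≤ c} :=
    (lowerSemicontinuous_treeNorm hK L).isClosed_preimage _
  simpa only [hcl.closure_eq] using isCompact_closure_setOf_treeNorm_le hK L c

theorem lipschitzWith_of_treeNorm_le (hK : IsCompact K) {L : ℕ} {f : C(K, ℝ)} {c : ℝ≥0}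
    (hf : treeNorm K L f ≤ c) : LipschitzWith c f := by
  obtain ⟨R, hR⟩ := hK.isBounded.exists_norm_le
  exact fun x y => ((treeNorm_bounds (le_max_right R 1)
    (fun x hx => (hR x hx).trans (le_max_left R 1)) L f).2 x y).trans (by gcongr)

end TreeSpaces

/-- **Compactness theorem.** If `f_n` is a sequence in `W^L(K)` (for `K ⊆ ℝ^d`
compact) with `C := liminf ‖f_n‖_{W^L(K)} < ∞`, then there exist `f ∈ W^L(K)` with
`‖f‖_{W^L(K)} ≤ C` and a subsequence `f_{n_k} → f` strongly in `C^{0,α}(K)` for all `α < 1`. -/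
theorem treeSpace_compactness {d : ℕ} (K : Set (Fin d → ℝ)) (hK : IsCompact K)
    (L : ℕ) (f : ℕ → C(K, ℝ))
    (hC : liminf (fun n => treeNorm K L (f n)) atTop ≠ ⊤) :
    ∃ (F : C(K, ℝ)) (φ : ℕ → ℕ), StrictMono φ ∧
      treeNorm K L F ≤ liminf (fun n => treeNorm K L (f n)) atTop ∧
      ∀ α ∈ Set.Ioo (0 : ℝ) 1,
        Tendsto (fun k => holderNorm K α (fun x : K => f (φ k) x - F x)) atTop (𝓝 0) := by
  have := isCompact_iff_compactSpace.1 hK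
  lift liminf (fun n => treeNorm K L (f n)) atTop to ℝ≥0 using hC with C hCeq
  let ε : ℕ → ℝ≥0∞ := fun n => ((n : ℝ≥0∞) + 1)⁻¹
  have hε : Tendsto ε atTop (𝓝 0) := by
    simpa [ε, Function.comp_def] using
      ENNReal.tendsto_inv_nat_nhds_zero.comp (tendsto_add_atTop_nat 1)
  obtain ⟨ψ, hψ, hψC⟩ : ∃ ψ : ℕ → ℕ, StrictMono ψ ∧ ∀ n, treeNorm K L (f (ψ n)) < C + ε n :=
    extraction_forall_of_frequently fun n => frequently_lt_of_liminf_lt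
      (u := fun k => treeNorm K L (f k)) (by isBoundedDefault)
      (hCeq ▸ ENNReal.lt_add_right ENNReal.coe_ne_top (ENNReal.inv_ne_zero.2 (by simp)))
  have hψ_le : ∀ n, treeNorm K L (f (ψ n)) ≤ (C + 1 : ℝ≥0) := fun n =>
    (hψC n).le.trans (by push_cast; gcongr; exact ENNReal.inv_le_one.2 le_add_self)
  obtain ⟨F, -, φ, hφ, hconv⟩ :=
    (isCompact_setOf_treeNorm_le hK L (C + 1)).tendsto_subseq (x := f ∘ ψ) hψ_le
  have hFC : treeNorm K L F ≤ C :=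
    (lowerSemicontinuous_treeNorm hK L).le_of_tendsto_of_le hconv
      (by simpa using tendsto_const_nhds.add (hε.comp hφ.tendsto_atTop)) fun k => (hψC (φ k)).le
  refine ⟨F, ψ ∘ φ, hψ.comp hφ, hFC, fun α hα => ?_⟩
  have hlip : ∀ k, LipschitzWith (C + 1 + C) (f (ψ (φ k)) - F) := fun k =>
    (lipschitzWith_of_treeNorm_le hK (hψ_le (φ k))).sub (lipschitzWith_of_treeNorm_le hK hFC)
  exact tendsto_holderNorm_zero (by simpa using hconv.sub_const F) hlip hα.1.le hα.2
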